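/- arXiv:2305.03833 — 2 statements merged into one kernel-verified Lean document; each statement's English description precedes it below -/
import Mathlib

section
/- If A is the incidence matrix of a symmetric 2-(11,5,2) design, then every two distinct columns of the matrix M = [[A, I],[I, Aᵀ]] have inner product 0 or 2, and every two distinct rows of M have inner product 0 or 2; i.e., M is the incidence matrix of a semi-biplane sbp(22,6). -/
open Matrix Finset

lemma key_rows (A : Matrix (Fin 11) (Fin 11) ℕ)
    (h01 : ∀ i j, A i j = 0 ∨ A i j = 1)
    (hrow : ∀ i, ∑ j, A i j = 5)
    (hcol : ∀ j, ∑ i, A i j = 5)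
    (hpair : ∀ j j', j ≠ j' → ∑ i, A i j * A i j' = 2) :
    ∀ i i', i ≠ i' → ∑ j, A i j * A i' j = 2 := by
  set B : Matrix (Fin 11) (Fin 11) ℚ := A.map (Nat.cast) with hBdef
  set J : Matrix (Fin 11) (Fin 11) ℚ := Matrix.of (fun _ _ => 1) with hJdef
  have hBapp : ∀ i j, B i j = (A i j : ℚ) := fun i j => rfl
  have hsq : ∀ i j, B i j * B i j = B i j := by
    intro i j
    rcases h01 i j with h | h <;> simp [hBapp, h]
  have hBrow : ∀ i, ∑ j, B i j = 5 := by
    intro i; simp only [hBapp]; exact_mod_cast hrow i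
  have hBcol : ∀ j, ∑ i, B i j = 5 := by
    intro j; simp only [hBapp]; exact_mod_cast hcol j
  have hC : Bᵀ * B = (3 : ℚ) • 1 + (2 : ℚ) • J := by
    ext j j'
    simp only [Matrix.mul_apply, Matrix.transpose_apply, Matrix.add_apply,
      Matrix.smul_apply, Matrix.one_apply, hJdef, Matrix.of_apply, smul_eq_mul]
    by_cases h : j = j'
    · subst h
      simp only [if_pos rfl]
      rw [show (∑ k, B k j * B k j) = ∑ k, B k j from by
        exact Finset.sum_congr rfl fun k _ => hsq k j, hBcol j]
      norm_num
    · simp only [if_neg h]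
      have := hpair j j' h
      have : (∑ i, B i j * B i j') = 2 := by
        simp only [hBapp]; exact_mod_cast this
      rw [this]; norm_num
  have hJJ : J * J = (11 : ℚ) • J := by
    ext i j
    simp [hJdef, Matrix.mul_apply]
  set D : Matrix (Fin 11) (Fin 11) ℚ := (1/3 : ℚ) • 1 - (2/75 : ℚ) • J with hDdef
  have hDC : D * (Bᵀ * B) = 1 := by
    rw [hC, hDdef]
    rw [Matrix.sub_mul, Matrix.smul_mul, Matrix.smul_mul, Matrix.mul_add, Matrix.mul_add,
      Matrix.mul_smul, Matrix.mul_smul, Matrix.mul_smul, Matrix.mul_smul,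
      Matrix.one_mul, Matrix.mul_one, hJJ]
    ext i j
    simp only [Matrix.sub_apply, Matrix.add_apply, Matrix.smul_apply, smul_eq_mul,
      Matrix.one_mul]
    ring
  have hCD : (Bᵀ * B) * D = 1 := by
    rw [hC, hDdef]
    rw [Matrix.add_mul, Matrix.smul_mul, Matrix.smul_mul, Matrix.mul_sub, Matrix.mul_sub,
      Matrix.mul_smul, Matrix.mul_smul, Matrix.mul_smul, Matrix.mul_smul,
      Matrix.one_mul, Matrix.mul_one, hJJ]
    ext i j
    simp only [Matrix.sub_apply, Matrix.add_apply, Matrix.smul_apply, smul_eq_mul,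
      Matrix.one_mul]
    ring
  set E : Matrix (Fin 11) (Fin 11) ℚ := D * Bᵀ with hEdef
  have hEB : E * B = 1 := by rw [hEdef, Matrix.mul_assoc]; exact hDC
  have hBE : B * E = 1 := mul_eq_one_comm.mp hEB
  have hBJ : B * J = (5 : ℚ) • J := by
    ext i j
    simp [hJdef, Matrix.mul_apply, hBrow i]
  have hJB : J * B = (5 : ℚ) • J := by
    ext i j
    simp [hJdef, Matrix.mul_apply, hBcol j]
  have hJE : J * E = (1/5 : ℚ) • J := by
    have h5 : (5 : ℚ) • (J * E) = J := by
      rw [← Matrix.smul_mul, ← hJB, Matrix.mul_assoc, hBE, Matrix.mul_one]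
    calc J * E = (1/5 : ℚ) • ((5 : ℚ) • (J * E)) := by rw [smul_smul]; norm_num
    _ = (1/5 : ℚ) • J := by rw [h5]
  have hBBt : B * Bᵀ = (3 : ℚ) • 1 + (2 : ℚ) • J := by
    calc B * Bᵀ = B * Bᵀ * (B * E) := by rw [hBE, Matrix.mul_one]
    _ = B * (Bᵀ * B) * E := by rw [Matrix.mul_assoc, Matrix.mul_assoc, Matrix.mul_assoc]
    _ = B * ((3 : ℚ) • 1 + (2 : ℚ) • J) * E := by rw [hC]
    _ = (3 : ℚ) • (B * E) + (2 : ℚ) • (B * (J * E)) := by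
        rw [Matrix.mul_add, Matrix.add_mul, Matrix.mul_smul, Matrix.mul_smul,
          Matrix.smul_mul, Matrix.smul_mul, Matrix.mul_one, Matrix.mul_assoc]
    _ = (3 : ℚ) • 1 + (2 : ℚ) • J := by
        rw [hBE, hJE, Matrix.mul_smul, hBJ]
        norm_num [smul_smul]
  intro i i' h
  have := congrFun (congrFun hBBt i) i'
  simp only [Matrix.mul_apply, Matrix.transpose_apply, Matrix.add_apply,
    Matrix.smul_apply, Matrix.one_apply, if_neg h, smul_eq_mul, hJdef, Matrix.of_apply] at this
  have hcast : ((∑ j, A i j * A i' j : ℕ) : ℚ) = 2 := by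
    push_cast
    simpa [hBapp] using this
  exact_mod_cast hcast

/-- If A is the incidence matrix of a symmetric 2-(11,5,2) design, then in
M = [[A, I],[I, A.transpose]] every two distinct columns have inner product 0 or 2 and
every two distinct rows have inner product 0 or 2; i.e. M is the incidence
matrix of a semi-biplane sbp(22,6). -/
theorem stmt_13 (A : Matrix (Fin 11) (Fin 11) ℕ)
    (h01 : ∀ i j, A i j = 0 ∨ A i j = 1)
    (hrow : ∀ i, ∑ j, A i j = 5)
    (hcol : ∀ j, ∑ i, A i j = 5)
    (hpair : ∀ j j', j ≠ j' → ∑ i, A i j * A i j' = 2) :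
    (∀ c c' : Fin 11 ⊕ Fin 11, c ≠ c' →
      ∑ r, (Matrix.fromBlocks A 1 1 A.transpose) r c * (Matrix.fromBlocks A 1 1 A.transpose) r c' = 0 ∨
      ∑ r, (Matrix.fromBlocks A 1 1 A.transpose) r c * (Matrix.fromBlocks A 1 1 A.transpose) r c' = 2) ∧
    (∀ r r' : Fin 11 ⊕ Fin 11, r ≠ r' →
      ∑ c, (Matrix.fromBlocks A 1 1 A.transpose) r c * (Matrix.fromBlocks A 1 1 A.transpose) r' c = 0 ∨
      ∑ c, (Matrix.fromBlocks A 1 1 A.transpose) r c * (Matrix.fromBlocks A 1 1 A.transpose) r' c = 2) := by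
  have krow := key_rows A h01 hrow hcol hpair
  constructor
  · rintro (j | j) (j' | j') hne
    · have hjj : j ≠ j' := fun h => hne (by rw [h])
      right
      rw [Fintype.sum_sum_type]
      simp only [Matrix.fromBlocks_apply₁₁, Matrix.fromBlocks_apply₂₁, Matrix.one_apply]
      rw [hpair j j' hjj]
      simp [Finset.sum_ite_eq, hjj, hjj.symm]
    · rw [Fintype.sum_sum_type]
      simp only [Matrix.fromBlocks_apply₁₁, Matrix.fromBlocks_apply₁₂,
        Matrix.fromBlocks_apply₂₁, Matrix.fromBlocks_apply₂₂, Matrix.one_apply,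
        Matrix.transpose_apply]
      have h1 : (∑ i, A i j * if i = j' then (1:ℕ) else 0) = A j' j := by
        simp [mul_ite]
      have h2 : (∑ i, (if i = j then (1:ℕ) else 0) * A j' i) = A j' j := by
        simp [ite_mul]
      rw [h1, h2]
      rcases h01 j' j with h | h <;> simp [h]
    · rw [Fintype.sum_sum_type]
      simp only [Matrix.fromBlocks_apply₁₁, Matrix.fromBlocks_apply₁₂,
        Matrix.fromBlocks_apply₂₁, Matrix.fromBlocks_apply₂₂, Matrix.one_apply,
        Matrix.transpose_apply]
      have h1 : (∑ i, (if i = j then (1:ℕ) else 0) * A i j') = A j j' := by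
        simp [ite_mul]
      have h2 : (∑ i, A j i * if i = j' then (1:ℕ) else 0) = A j j' := by
        simp [mul_ite]
      rw [h1, h2]
      rcases h01 j j' with h | h <;> simp [h]
    · have hjj : j ≠ j' := fun h => hne (by rw [h])
      right
      rw [Fintype.sum_sum_type]
      simp only [Matrix.fromBlocks_apply₁₂, Matrix.fromBlocks_apply₂₂, Matrix.one_apply,
        Matrix.transpose_apply]
      rw [krow j j' hjj]
      simp [Finset.sum_ite_eq, hjj, hjj.symm]
  · rintro (i | i) (i' | i') hne
    · have hii : i ≠ i' := fun h => hne (by rw [h])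
      right
      rw [Fintype.sum_sum_type]
      simp only [Matrix.fromBlocks_apply₁₁, Matrix.fromBlocks_apply₁₂, Matrix.one_apply]
      rw [krow i i' hii]
      simp [Finset.sum_ite_eq, hii, hii.symm]
    · rw [Fintype.sum_sum_type]
      simp only [Matrix.fromBlocks_apply₁₁, Matrix.fromBlocks_apply₁₂,
        Matrix.fromBlocks_apply₂₁, Matrix.fromBlocks_apply₂₂, Matrix.one_apply,
        Matrix.transpose_apply]
      have h1 : (∑ a, A i a * if i' = a then (1:ℕ) else 0) = A i i' := by
        simp [mul_ite]
      have h2 : (∑ b, (if i = b then (1:ℕ) else 0) * A b i') = A i i' := by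
        simp [ite_mul]
      rw [h1, h2]
      rcases h01 i i' with h | h <;> simp [h]
    · rw [Fintype.sum_sum_type]
      simp only [Matrix.fromBlocks_apply₁₁, Matrix.fromBlocks_apply₁₂,
        Matrix.fromBlocks_apply₂₁, Matrix.fromBlocks_apply₂₂, Matrix.one_apply,
        Matrix.transpose_apply]
      have h1 : (∑ a, (if i = a then (1:ℕ) else 0) * A i' a) = A i' i := by
        simp [ite_mul]
      have h2 : (∑ b, A b i * if i' = b then (1:ℕ) else 0) = A i' i := by
        simp [mul_ite]
      rw [h1, h2]
      rcases h01 i' i with h | h <;> simp [h]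
    · have hii : i ≠ i' := fun h => hne (by rw [h])
      right
      rw [Fintype.sum_sum_type]
      simp only [Matrix.fromBlocks_apply₂₁, Matrix.fromBlocks_apply₂₂, Matrix.one_apply,
        Matrix.transpose_apply]
      rw [hpair i i' hii]
      simp [Finset.sum_ite_eq, hii, hii.symm]
end

section
/- A transitive 3-(v,{4,6},1) design with exactly v blocks of size 6 is homogeneous: the blocks of size 4 form a 1-design and the blocks of size 6 form a 1-(v,6,6) design. -/
/-- A transitive 3-(v,{4,6},1) design with exactly v blocks of size 6 is
homogeneous: the 4-blocks form a 1-design and the 6-blocks form a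
1-(v,6,6) design. -/
theorem stmt_17 {X : Type*} [Fintype X] [DecidableEq X] (v : ℕ)
    (hv : Fintype.card X = v) (B : Finset (Finset X))
    (hsize : ∀ b ∈ B, b.card = 4 ∨ b.card = 6)
    (hcover : ∀ T : Finset X, T.card = 3 → (B.filter (fun b => T ⊆ b)).card = 1)
    (hhex : (B.filter (fun b => b.card = 6)).card = v)
    (htrans : ∀ x y : X, ∃ g : Equiv.Perm X,
      (∀ b ∈ B, b.map g.toEmbedding ∈ B) ∧ g x = y) :
    (∃ r4 : ℕ, ∀ x : X, (B.filter (fun b => b.card = 4 ∧ x ∈ b)).card = r4) ∧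
    (∀ x : X, (B.filter (fun b => b.card = 6 ∧ x ∈ b)).card = 6) := by
  classical
  have hconst : ∀ (c : ℕ) (x y : X),
      (B.filter (fun b => b.card = c ∧ x ∈ b)).card
        = (B.filter (fun b => b.card = c ∧ y ∈ b)).card := by
    intro c x y
    obtain ⟨g, hg, hgxy⟩ := htrans x y
    have hinj : Function.Injective (fun b : Finset X => b.map g.toEmbedding) :=
      fun a b h => Finset.map_injective _ h
    have himg : B.image (fun b => b.map g.toEmbedding) = B := by
      apply Finset.eq_of_subset_of_card_le
      · intro b hb
        obtain ⟨a, ha, rfl⟩ := Finset.mem_image.mp hb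
        exact hg a ha
      · rw [Finset.card_image_of_injective _ hinj]
    apply Finset.card_bij (fun b _ => b.map g.toEmbedding)
    · intro a ha
      simp only [Finset.mem_filter] at ha ⊢
      refine ⟨hg a ha.1, ?_, ?_⟩
      · rw [Finset.card_map]; exact ha.2.1
      · rw [Finset.mem_map]
        exact ⟨x, ha.2.2, hgxy⟩
    · intro a _ b _ h
      exact hinj h
    · intro b hb
      simp only [Finset.mem_filter] at hb
      have hb' : b ∈ B.image (fun b => b.map g.toEmbedding) := by rw [himg]; exact hb.1
      obtain ⟨a, haB, rfl⟩ := Finset.mem_image.mp hb'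
      refine ⟨a, Finset.mem_filter.mpr ⟨haB, ?_, ?_⟩, rfl⟩
      · have := hb.2.1; rwa [Finset.card_map] at this
      · obtain ⟨z, hz, hzx⟩ := Finset.mem_map.mp hb.2.2
        have hzx' : z = x := g.injective (by simpa [hgxy] using hzx)
        rwa [hzx'] at hz
  rcases isEmpty_or_nonempty X with hE | hNE
  · exact ⟨⟨0, fun x => (hE.false x).elim⟩, fun x => (hE.false x).elim⟩
  · obtain ⟨x0⟩ := hNE
    refine ⟨⟨(B.filter (fun b => b.card = 4 ∧ x0 ∈ b)).card,
      fun x => hconst 4 x x0⟩, ?_⟩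
    have hvpos : 0 < v := hv ▸ Fintype.card_pos_iff.mpr ⟨x0⟩
    have hsum : ∑ x : X, (B.filter (fun b => b.card = 6 ∧ x ∈ b)).card = 6 * v := by
      have h1 : ∀ x : X, (B.filter (fun b => b.card = 6 ∧ x ∈ b)).card
          = ∑ b ∈ B.filter (fun b => b.card = 6), (if x ∈ b then 1 else 0) := by
        intro x
        rw [← Finset.filter_filter, Finset.card_filter]
      calc ∑ x : X, (B.filter (fun b => b.card = 6 ∧ x ∈ b)).card
          = ∑ x : X, ∑ b ∈ B.filter (fun b => b.card = 6), (if x ∈ b then 1 else 0) :=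
            Finset.sum_congr rfl (fun x _ => h1 x)
        _ = ∑ b ∈ B.filter (fun b => b.card = 6), ∑ x : X, (if x ∈ b then 1 else 0) :=
            Finset.sum_comm
        _ = ∑ b ∈ B.filter (fun b => b.card = 6), b.card := by
            refine Finset.sum_congr rfl (fun b _ => ?_)
            simp [Finset.sum_ite_mem, Finset.univ_inter]
        _ = ∑ _b ∈ B.filter (fun b => b.card = 6), 6 := by
            refine Finset.sum_congr rfl (fun b hb => ?_)
            exact (Finset.mem_filter.mp hb).2
        _ = 6 * v := by rw [Finset.sum_const, hhex, smul_eq_mul, Nat.mul_comm]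
    have h2 : ∑ x : X, (B.filter (fun b => b.card = 6 ∧ x ∈ b)).card
        = v * (B.filter (fun b => b.card = 6 ∧ x0 ∈ b)).card := by
      rw [Finset.sum_congr rfl (fun x _ => hconst 6 x x0), Finset.sum_const,
        Finset.card_univ, hv, smul_eq_mul]
    have hx0 : (B.filter (fun b => b.card = 6 ∧ x0 ∈ b)).card = 6 := by
      have : v * (B.filter (fun b => b.card = 6 ∧ x0 ∈ b)).card = v * 6 := by
        rw [← h2, hsum, Nat.mul_comm]
      exact Nat.eq_of_mul_eq_mul_left hvpos this
    intro x
    rw [hconst 6 x x0, hx0]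
end
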